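/- For every real number L > 0, there are infinitely many positive integers n such that Z(n+1) > L · Z(n); equivalently, the ratio Z(n+1)/Z(n) of consecutive values of Z is unbounded. -/

import Mathlib

/-- The m-th triangular number. -/
def T (m : ℕ) : ℕ := m * (m + 1) / 2

/-- The pseudo-Smarandache function: the least positive m with n ∣ T m. -/
noncomputable def Z (n : ℕ) : ℕ := sInf {m : ℕ | 0 < m ∧ n ∣ T m}

/-! A prime `p` dividing `T m` divides `m (m + 1)`, so `Z p ≥ p - 1`. For `n = b (2bt + 1)` one has
`T (2bt) = t n`, so `Z n ≤ 2bt < n / b`. When `b` is even, `b + 1` is coprime to `2b²`, and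
Dirichlet's theorem gives infinitely many `t` with `n + 1 = 2b²t + b + 1` prime; for these
`Z (n + 1) ≥ n > b Z n`. -/

theorem two_mul_T (m : ℕ) : 2 * T m = m * (m + 1) :=
  Nat.mul_div_cancel' (Nat.even_mul_succ_self m).two_dvd

theorem T_two_mul (n : ℕ) : T (2 * n) = n * (2 * n + 1) := by
  have := two_mul_T (2 * n)
  nlinarith

theorem Z_le_of_dvd_T {n m : ℕ} (hm : 0 < m) (h : n ∣ T m) : Z n ≤ m :=
  Nat.sInf_le ⟨hm, h⟩

theorem Z_pos_and_dvd_T {n : ℕ} (hn : 0 < n) : 0 < Z n ∧ n ∣ T (Z n) :=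
  Nat.sInf_mem (s := {m : ℕ | 0 < m ∧ n ∣ T m}) ⟨2 * n, by omega, T_two_mul n ▸ dvd_mul_right n _⟩

theorem Nat.Prime.sub_one_le_Z {p : ℕ} (hp : p.Prime) : p - 1 ≤ Z p := by
  obtain ⟨hpos, hdvd⟩ := Z_pos_and_dvd_T hp.pos
  have : p ∣ Z p * (Z p + 1) := two_mul_T (Z p) ▸ hdvd.mul_left 2
  rcases hp.dvd_mul.mp this with h | h
  · exact (Nat.le_of_dvd hpos h).trans' (Nat.sub_le p 1)
  · have := Nat.le_of_dvd (Nat.succ_pos _) h; omega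

theorem Z_mul_two_mul_add_one_le {b t : ℕ} (hb : 0 < b) (ht : 0 < t) :
    Z (b * (2 * b * t + 1)) ≤ 2 * b * t :=
  Z_le_of_dvd_T (by positivity) ⟨t, by rw [mul_assoc, T_two_mul]; ring⟩

theorem coprime_succ_two_mul_sq {b : ℕ} (hb : Even b) : (b + 1).Coprime (2 * b ^ 2) :=
  Nat.Coprime.mul_right (Nat.coprime_two_right.mpr hb.add_one)
    ((Nat.coprime_self_add_left.mpr (Nat.coprime_one_left b)).pow_right 2)

theorem exists_prime_mul_two_mul_add_one_add_one (N : ℕ) {b : ℕ} (hb : Even b) (hb0 : 0 < b) :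
    ∃ t, 0 < t ∧ N < b * (2 * b * t + 1) ∧ (b * (2 * b * t + 1) + 1).Prime := by
  obtain ⟨p, hpN, hp, hmod⟩ :=
    Nat.forall_exists_prime_gt_and_modEq (N + b + 1) (by positivity) (coprime_succ_two_mul_sq hb)
  obtain ⟨t, ht⟩ := (Nat.modEq_iff_dvd' (by omega)).mp hmod.symm
  have hp_eq : p = b * (2 * b * t + 1) + 1 := by
    rw [Nat.eq_add_of_sub_eq (by omega) ht]; ring
  refine ⟨t, Nat.pos_of_ne_zero ?_, by omega, hp_eq ▸ hp⟩
  rintro rfl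
  rw [mul_zero] at ht
  omega

theorem stmt_9_general (L : ℝ) :
    {n : ℕ | 0 < n ∧ (Z (n + 1) : ℝ) > L * (Z n : ℝ)}.Infinite := by
  obtain ⟨b, hb, hb0, hLb⟩ : ∃ b : ℕ, Even b ∧ 0 < b ∧ L ≤ b :=
    ⟨2 * (⌈L⌉₊ + 1), even_two_mul _, by positivity, by push_cast; linarith [Nat.le_ceil L]⟩
  refine Set.infinite_of_forall_exists_gt fun N => ?_
  obtain ⟨t, ht, hN, hp⟩ := exists_prime_mul_two_mul_add_one_add_one N hb hb0
  set n := b * (2 * b * t + 1)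
  have hZ : b * Z n < Z (n + 1) := calc
    b * Z n ≤ b * (2 * b * t) := Nat.mul_le_mul_left b (Z_mul_two_mul_add_one_le hb0 ht)
    _ < n := Nat.mul_lt_mul_of_pos_left (Nat.lt_succ_self _) hb0
    _ ≤ Z (n + 1) := hp.sub_one_le_Z
  refine ⟨n, ⟨by positivity, ?_⟩, hN⟩
  calc L * Z n ≤ b * Z n := mul_le_mul_of_nonneg_right hLb (Nat.cast_nonneg _)
    _ < Z (n + 1) := by exact_mod_cast hZ

theorem stmt_9 (L : ℝ) (hL : 0 < L) :
    {n : ℕ | 0 < n ∧ (Z (n + 1) : ℝ) > L * (Z n : ℝ)}.Infinite :=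
  stmt_9_general L
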